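/- arXiv:1904.06957 — 5 statements merged into one kernel-verified Lean document; each statement's English description precedes it below -/
import Mathlib

section
/- For every N > 0 one has the scaling relation e(N) = N³ ē(1/N) between the two infima. -/
/-! The dilation `u ↦ c² u(c ·)` (`rescale (c ^ 2) c⁻¹`) preserves `H^{1/2}(ℝ³)`, multiplies the
mass by `c` and the Hartree term by `c³`; since `𝓕` turns it into `ξ ↦ c⁻¹ 𝓕u(ξ / c)`, the change
of variables `ξ = c η` turns the kinetic symbol of `𝓔_c` into `c² (√(|η|² + m²) - m)`, so that
`𝓔_c(c² u(c ·)) = c³ 𝓔(u)`. For `c = 1/N` the dilation maps the constraint set of `e(N)` onto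
that of `ē(1/N)`, so the two sets of energies, and hence their infima, differ by the factor `N³`.
-/

open MeasureTheory Filter
open scoped FourierTransform SchwartzMap RealInnerProductSpace

noncomputable section

/-- Euclidean space ℝ³. -/
abbrev R3 := EuclideanSpace ℝ (Fin 3)

/-- Newtonian potential convolution `(|x|⁻¹ ∗ f)(x) = ∫ f(y)/|x-y| dy`. -/
def conv (f : R3 → ℝ) (x : R3) : ℝ := ∫ y : R3, f y / ‖x - y‖

/-- `u ∈ H^{1/2}(ℝ³)`: `u ∈ L²` and `∫ √(1+|ξ|²) |𝓕u(ξ)|² dξ < ∞`. -/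
def InH12 (u : R3 → ℂ) : Prop :=
  MemLp u 2 volume ∧
    Integrable (fun ξ : R3 => Real.sqrt (1 + ‖ξ‖ ^ 2) * ‖𝓕 u ξ‖ ^ 2) volume

/-- The double (Hartree) integral `∬ |u(x)|²|u(y)|²/|x-y| dx dy`. -/
def hartree (u : R3 → ℂ) : ℝ := ∫ x : R3, ∫ y : R3, ‖u x‖ ^ 2 * ‖u y‖ ^ 2 / ‖x - y‖

/-- The pseudo-relativistic Hartree energy `𝓔(u)` with mass `m`. -/
def energyE (m : ℝ) (u : R3 → ℂ) : ℝ :=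
  (∫ ξ : R3, (Real.sqrt (‖ξ‖ ^ 2 + m ^ 2) - m) * ‖𝓕 u ξ‖ ^ 2) - (1 / 2) * hartree u

/-- `e(N)`. -/
def eN (m N : ℝ) : ℝ :=
  sInf {t : ℝ | ∃ u : R3 → ℂ, InH12 u ∧ (∫ x : R3, ‖u x‖ ^ 2) = N ∧ energyE m u = t}

/-- The rescaled energy `𝓔_c(u)`. -/
def energyEc (m c : ℝ) (u : R3 → ℂ) : ℝ :=
  (∫ ξ : R3, (Real.sqrt (c ^ 2 * ‖ξ‖ ^ 2 + m ^ 2 * c ^ 4) - m * c ^ 2) * ‖𝓕 u ξ‖ ^ 2)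
    - (1 / 2) * hartree u

/-- `ē(c)`. -/
def ebar (m c : ℝ) : ℝ :=
  sInf {t : ℝ | ∃ u : R3 → ℂ, InH12 u ∧ (∫ x : R3, ‖u x‖ ^ 2) = 1 ∧ energyEc m c u = t}

/-- `u` is a minimizer of `e(N)`. -/
def IsMinimizerE (m N : ℝ) (u : R3 → ℂ) : Prop :=
  InH12 u ∧ (∫ x : R3, ‖u x‖ ^ 2) = N ∧ energyE m u = eN m N

/-- `u` is a minimizer of `ē(c)`. -/
def IsMinimizerEc (m c : ℝ) (u : R3 → ℂ) : Prop :=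
  InH12 u ∧ (∫ x : R3, ‖u x‖ ^ 2) = 1 ∧ energyEc m c u = ebar m c

/-- Radial symmetry. -/
def Radial (f : R3 → ℝ) : Prop := ∀ x y : R3, ‖x‖ = ‖y‖ → f x = f y

open Module

section Rescale

variable {E : Type*} [AddCommGroup E] [Module ℝ E]

def rescale (a b : ℝ) (u : E → ℂ) : E → ℂ :=
  fun x => (a : ℂ) * u (b⁻¹ • x)

theorem rescale_rescale (a a' b b' : ℝ) (u : E → ℂ) :
    rescale a b (rescale a' b' u) = rescale (a * a') (b * b') u := by
  funext x
  simp only [rescale, smul_smul, mul_inv, Complex.ofReal_mul]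
  ring_nf

theorem rescale_one_one (u : E → ℂ) : rescale 1 1 u = u := by
  funext x
  simp [rescale]

end Rescale

section HaarMeasure

variable {E : Type*} [NormedAddCommGroup E] [NormedSpace ℝ E] [MeasurableSpace E] [BorelSpace E]
  [FiniteDimensional ℝ E] (μ : Measure E) [μ.IsAddHaarMeasure]

theorem integral_norm_rescale_sq (u : E → ℂ) (a : ℝ) {b : ℝ} (hb : 0 ≤ b) :
    ∫ x, ‖rescale a b u x‖ ^ 2 ∂μ = a ^ 2 * b ^ finrank ℝ E * ∫ x, ‖u x‖ ^ 2 ∂μ := by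
  simp only [rescale, norm_mul, Complex.norm_real, Real.norm_eq_abs, mul_pow, sq_abs]
  rw [integral_const_mul, Measure.integral_comp_inv_smul_of_nonneg μ (fun x => ‖u x‖ ^ 2) hb,
    smul_eq_mul]
  ring

theorem integral_integral_comp_inv_smul {F : Type*} [NormedAddCommGroup F] [NormedSpace ℝ F]
    (g : E → E → F) {b : ℝ} (hb : 0 ≤ b) :
    ∫ x, ∫ y, g (b⁻¹ • x) (b⁻¹ • y) ∂μ ∂μ = (b ^ finrank ℝ E) ^ 2 • ∫ x, ∫ y, g x y ∂μ ∂μ := by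
  simp_rw [Measure.integral_comp_inv_smul_of_nonneg μ (g _) hb]
  rw [Measure.integral_comp_inv_smul_of_nonneg μ (fun x => b ^ finrank ℝ E • ∫ y, g x y ∂μ) hb,
    integral_smul, smul_smul, sq]

variable {μ} in
theorem MeasureTheory.MemLp.rescale {u : E → ℂ} {p : ENNReal} (hu : MemLp u p μ) (a : ℝ) {b : ℝ}
    (hb : b ≠ 0) :
    MemLp (rescale a b u) p μ := by
  have hmap : MemLp u p (μ.map (b⁻¹ • ·)) := by
    rw [Measure.map_addHaar_smul μ (inv_ne_zero hb)]
    exact hu.smul_measure ENNReal.ofReal_ne_top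
  exact (hmap.comp_of_map (measurable_const_smul _).aemeasurable).const_mul (a : ℂ)

end HaarMeasure

section Fourier

variable {E : Type*} [NormedAddCommGroup E] [InnerProductSpace ℝ E] [MeasurableSpace E]
  [BorelSpace E] [FiniteDimensional ℝ E]

theorem fourier_rescale (u : E → ℂ) (a : ℝ) {b : ℝ} (hb : 0 < b) (ξ : E) :
    𝓕 (rescale a b u) ξ = (a * b ^ finrank ℝ E) • 𝓕 u (b • ξ) := by
  have hinner (v : E) : ⟪b⁻¹ • v, b • ξ⟫ = ⟪v, ξ⟫ := by
    rw [real_inner_smul_left, real_inner_smul_right, inv_mul_cancel_left₀ hb.ne']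
  calc 𝓕 (rescale a b u) ξ
      = ∫ v, (fun x : E => 𝐞 (-⟪x, b • ξ⟫) • ((a : ℂ) * u x)) (b⁻¹ • v) := by
        simp only [Real.fourier_eq, rescale, hinner]
    _ = b ^ finrank ℝ E • ((a : ℂ) * 𝓕 u (b • ξ)) :=
        (Measure.integral_comp_inv_smul_of_nonneg volume
          (fun x : E => 𝐞 (-⟪x, b • ξ⟫) • ((a : ℂ) * u x)) hb.le).trans <| by
          simp only [← mul_smul_comm, integral_const_mul, Real.fourier_eq]
    _ = (a * b ^ finrank ℝ E) • 𝓕 u (b • ξ) := by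
        simp only [Complex.real_smul, Complex.ofReal_mul, Complex.ofReal_pow]
        ring

theorem integral_mul_norm_fourier_rescale_sq (φ : E → ℝ) (u : E → ℂ) (a : ℝ) {b : ℝ}
    (hb : 0 < b) :
    ∫ ξ, φ ξ * ‖𝓕 (rescale a b u) ξ‖ ^ 2 =
      a ^ 2 * b ^ finrank ℝ E * ∫ η, φ (b⁻¹ • η) * ‖𝓕 u η‖ ^ 2 := by
  have hpoint (ξ : E) : φ ξ * ‖𝓕 (rescale a b u) ξ‖ ^ 2 =
      (a * b ^ finrank ℝ E) ^ 2 * (φ (b⁻¹ • b • ξ) * ‖𝓕 u (b • ξ)‖ ^ 2) := by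
    rw [fourier_rescale u a hb, norm_smul, Real.norm_eq_abs, mul_pow, sq_abs,
      inv_smul_smul₀ hb.ne']
    ring
  simp only [hpoint, integral_const_mul]
  rw [Measure.integral_comp_smul volume (fun η => φ (b⁻¹ • η) * ‖𝓕 u η‖ ^ 2) b,
    abs_of_pos (by positivity), smul_eq_mul]
  field_simp

theorem Real.sqrt_one_add_mul_sq_le {t : ℝ} (ht : 0 ≤ t) (r : ℝ) :
    √(1 + (t * r) ^ 2) ≤ max 1 t * √(1 + r ^ 2) := by
  have hC : 1 ≤ max 1 t := le_max_left 1 t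
  have htC : t ^ 2 ≤ max 1 t ^ 2 := pow_le_pow_left₀ ht (le_max_right 1 t) 2
  calc √(1 + (t * r) ^ 2) ≤ √(max 1 t ^ 2 * (1 + r ^ 2)) := by
        gcongr
        nlinarith [sq_nonneg r]
    _ = max 1 t * √(1 + r ^ 2) := by
        rw [Real.sqrt_mul (sq_nonneg _), Real.sqrt_sq (by positivity)]

theorem MeasureTheory.Integrable.sqrt_one_add_sq_mul_norm_fourier_rescale_sq {u : E → ℂ}
    (hu : Integrable (fun ξ : E => √(1 + ‖ξ‖ ^ 2) * ‖𝓕 u ξ‖ ^ 2)) (a : ℝ) {b : ℝ} (hb : 0 < b) :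
    Integrable (fun ξ : E => √(1 + ‖ξ‖ ^ 2) * ‖𝓕 (rescale a b u) ξ‖ ^ 2) := by
  set w : E → ℝ := fun η => √(1 + ‖b⁻¹ • η‖ ^ 2) / √(1 + ‖η‖ ^ 2)
  have hw_cont : Continuous w :=
    Continuous.div (by fun_prop) (by fun_prop) fun η => by positivity
  have hw_le (η : E) : ‖w η‖ ≤ max 1 b⁻¹ := by
    have hpos : 0 < √(1 + ‖η‖ ^ 2) := by positivity
    rw [Real.norm_of_nonneg (by positivity), div_le_iff₀ hpos, norm_smul,
      Real.norm_of_nonneg (inv_nonneg.2 hb.le)]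
    exact Real.sqrt_one_add_mul_sq_le (inv_nonneg.2 hb.le) ‖η‖
  have hG : Integrable (fun η => w η * (√(1 + ‖η‖ ^ 2) * ‖𝓕 u η‖ ^ 2)) :=
    hu.bdd_mul hw_cont.aestronglyMeasurable (.of_forall hw_le)
  refine ((hG.comp_smul hb.ne').const_mul ((a * b ^ finrank ℝ E) ^ 2)).congr (.of_forall ?_)
  intro ξ
  simp only [w, fourier_rescale u a hb, norm_smul, Real.norm_eq_abs, mul_pow, sq_abs]
  field_simp

end Fourier

theorem integral_norm_rescale_sq_R3 (u : R3 → ℂ) (a : ℝ) {b : ℝ} (hb : 0 ≤ b) :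
    ∫ x : R3, ‖rescale a b u x‖ ^ 2 = a ^ 2 * b ^ 3 * ∫ x : R3, ‖u x‖ ^ 2 := by
  rw [integral_norm_rescale_sq volume u a hb, finrank_euclideanSpace_fin]

theorem InH12.rescale {u : R3 → ℂ} (hu : InH12 u) (a : ℝ) {b : ℝ} (hb : 0 < b) :
    InH12 (rescale a b u) :=
  ⟨MemLp.rescale hu.1 a hb.ne',
    Integrable.sqrt_one_add_sq_mul_norm_fourier_rescale_sq hu.2 a hb⟩

theorem hartree_rescale (u : R3 → ℂ) (a : ℝ) {b : ℝ} (hb : 0 < b) :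
    hartree (rescale a b u) = a ^ 4 * b ^ 5 * hartree u := by
  set g : R3 → R3 → ℝ := fun x y => a ^ 4 * b⁻¹ * (‖u x‖ ^ 2 * ‖u y‖ ^ 2 / ‖x - y‖)
  have hpoint (x y : R3) : ‖rescale a b u x‖ ^ 2 * ‖rescale a b u y‖ ^ 2 / ‖x - y‖ =
      g (b⁻¹ • x) (b⁻¹ • y) := by
    have hdist : ‖x - y‖ = b * ‖b⁻¹ • x - b⁻¹ • y‖ := by
      rw [← smul_sub, norm_smul, Real.norm_of_nonneg (inv_nonneg.2 hb.le),
        mul_inv_cancel_left₀ hb.ne']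
    simp only [g, rescale, norm_mul, Complex.norm_real, Real.norm_eq_abs, mul_pow, sq_abs, hdist]
    field_simp
  calc hartree (rescale a b u) = ∫ x : R3, ∫ y : R3, g (b⁻¹ • x) (b⁻¹ • y) := by
        simp only [hartree, hpoint]
    _ = (b ^ 3) ^ 2 • ∫ x : R3, ∫ y : R3, g x y := by
        rw [integral_integral_comp_inv_smul volume g hb.le, finrank_euclideanSpace_fin]
    _ = a ^ 4 * b ^ 5 * hartree u := by
        simp only [g, hartree, integral_const_mul, smul_eq_mul]
        field_simp

theorem energyEc_rescale (m : ℝ) {c : ℝ} (hc : 0 < c) (u : R3 → ℂ) :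
    energyEc m c (rescale (c ^ 2) c⁻¹ u) = c ^ 3 * energyE m u := by
  have hkinetic (η : R3) :
      √(c ^ 2 * ‖c⁻¹⁻¹ • η‖ ^ 2 + m ^ 2 * c ^ 4) - m * c ^ 2 =
        c ^ 2 * (√(‖η‖ ^ 2 + m ^ 2) - m) := by
    have hsq : c ^ 2 * ‖c⁻¹⁻¹ • η‖ ^ 2 + m ^ 2 * c ^ 4 = (c ^ 2) ^ 2 * (‖η‖ ^ 2 + m ^ 2) := by
      rw [inv_inv, norm_smul, Real.norm_of_nonneg hc.le]
      ring
    rw [hsq, Real.sqrt_mul (by positivity), Real.sqrt_sq (by positivity)]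
    ring
  have hmul := integral_mul_norm_fourier_rescale_sq
    (fun ξ : R3 => √(c ^ 2 * ‖ξ‖ ^ 2 + m ^ 2 * c ^ 4) - m * c ^ 2) u (c ^ 2) (inv_pos.2 hc)
  simp only [hkinetic, mul_assoc, integral_const_mul, finrank_euclideanSpace_fin] at hmul
  rw [energyEc, energyE, hmul, hartree_rescale u _ (inv_pos.2 hc)]
  field_simp

open scoped Pointwise in
theorem setOf_energyE_eq_smul_setOf_energyEc (m : ℝ) {N : ℝ} (hN : 0 < N) :
    {t : ℝ | ∃ u : R3 → ℂ, InH12 u ∧ (∫ x : R3, ‖u x‖ ^ 2) = N ∧ energyE m u = t} =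
      N ^ 3 • {t : ℝ | ∃ v : R3 → ℂ, InH12 v ∧ (∫ x : R3, ‖v x‖ ^ 2) = 1 ∧
        energyEc m (1 / N) v = t} := by
  set c := 1 / N
  have hc : 0 < c := by positivity
  have hcN : N = c⁻¹ := by simp [c]
  ext t
  constructor
  · rintro ⟨u, hu, hmass, rfl⟩
    refine ⟨_, ⟨rescale (c ^ 2) c⁻¹ u, hu.rescale _ (inv_pos.2 hc), ?_, rfl⟩, ?_⟩
    · rw [integral_norm_rescale_sq_R3 u _ (inv_pos.2 hc).le, hmass, hcN]
      field_simp
    · simp only [smul_eq_mul]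
      rw [energyEc_rescale m hc, hcN]
      field_simp
  · rintro ⟨_, ⟨v, hv, hmass, rfl⟩, rfl⟩
    have hv_eq : rescale (c ^ 2) c⁻¹ (rescale (c ^ 2)⁻¹ c v) = v := by
      rw [rescale_rescale, mul_inv_cancel₀ (by positivity), inv_mul_cancel₀ hc.ne',
        rescale_one_one]
    refine ⟨rescale (c ^ 2)⁻¹ c v, hv.rescale _ hc, ?_, ?_⟩
    · rw [integral_norm_rescale_sq_R3 v _ hc.le, hmass, hcN]
      field_simp
    · have hscale := energyEc_rescale m hc (rescale (c ^ 2)⁻¹ c v)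
      rw [hv_eq] at hscale
      simp only [smul_eq_mul]
      rw [hscale, hcN]
      field_simp

theorem stmt_2_general (m : ℝ) (N : ℝ) (hN : 0 < N) :
    eN m N = N ^ 3 * ebar m (1 / N) := by
  rw [eN, ebar, setOf_energyE_eq_smul_setOf_energyEc m hN,
    Real.sInf_smul_of_nonneg (by positivity), smul_eq_mul]

/-- the scaling relation `e(N) = N³ ē(1/N)`. -/
theorem stmt_2 (m : ℝ) (hm : 0 < m) (N : ℝ) (hN : 0 < N) :
    eN m N = N ^ 3 * ebar m (1 / N) :=
  stmt_2_general m N hN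
end
end

section
/- Let f : ℝ³ → ℝ be a Schwartz function. Then for every x ∈ ℝ³ one has ∫_{ℝ³} (x−y)·∇f(y) / |x−y| dy = 2 ∫_{ℝ³} f(y) / |x−y| dy. -/
/-!
Scaling argument: for `t > 0` the substitution `z ↦ t • z` gives
`I(t) := ∫ g (t • z) / ‖z‖ dz = t ^ (1 - d) * I(1)` on a `d`-dimensional space. Differentiating at
`t = 1` under the integral sign (dominated by the Schwartz decay of `∇g`) yields
`∫ ∇g(z) · z / ‖z‖ dz = (1 - d) * I(1)`; translating by `x` gives the claim with `d - 1 = 2`.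
-/

open MeasureTheory
open scoped SchwartzMap

noncomputable section

open Set Metric Filter Module
open scoped Topology

section NormedSpace

variable {E : Type*} [NormedAddCommGroup E] [NormedSpace ℝ E]

theorem one_add_norm_le_two_mul_one_add_norm_smul (z : E) {t : ℝ} (ht : 1 / 2 < t) :
    1 + ‖z‖ ≤ 2 * (1 + ‖t • z‖) := by
  rw [norm_smul, Real.norm_of_nonneg (by linarith)]
  nlinarith [norm_nonneg z]

theorem SchwartzMap.exists_norm_fderiv_smul_le {V : Type*} [NormedAddCommGroup V]
    [NormedSpace ℝ V] (g : 𝓢(E, V)) (k : ℕ) :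
    ∃ C, ∀ z, ∀ t ∈ Ioi (1 / 2 : ℝ), ‖fderiv ℝ g (t • z)‖ ≤ C * (1 + ‖z‖) ^ (-(k : ℝ)) := by
  set M := (Finset.Iic (k, 1)).sup (fun m ↦ SchwartzMap.seminorm ℝ m.1 m.2) g
  refine ⟨2 ^ k * (2 ^ k * M), fun z t ht ↦ ?_⟩
  have hdecay : (1 + ‖t • z‖) ^ k * ‖fderiv ℝ g (t • z)‖ ≤ 2 ^ k * M := by
    simpa [norm_iteratedFDeriv_one] using
      one_add_le_sup_seminorm_apply (𝕜 := ℝ) (m := (k, 1)) le_rfl le_rfl g (t • z)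
  have hz : (1 + ‖z‖) ^ k * ‖fderiv ℝ g (t • z)‖ ≤ 2 ^ k * (2 ^ k * M) := calc
    (1 + ‖z‖) ^ k * ‖fderiv ℝ g (t • z)‖ ≤ (2 * (1 + ‖t • z‖)) ^ k * ‖fderiv ℝ g (t • z)‖ := by
        gcongr; exact one_add_norm_le_two_mul_one_add_norm_smul z ht
    _ = 2 ^ k * ((1 + ‖t • z‖) ^ k * ‖fderiv ℝ g (t • z)‖) := by rw [mul_pow]; ring
    _ ≤ 2 ^ k * (2 ^ k * M) := by gcongr
  rw [Real.rpow_neg (by positivity), Real.rpow_natCast, ← div_eq_mul_inv,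
    le_div_iff₀ (by positivity)]
  linarith

end NormedSpace

variable {E : Type*} [NormedAddCommGroup E] [NormedSpace ℝ E] [FiniteDimensional ℝ E]
  [MeasurableSpace E] [BorelSpace E] {μ : Measure E} [μ.IsAddHaarMeasure]

theorem integrable_div_norm_of_abs_le (hd : 1 < finrank ℝ E) {h : E → ℝ} (hi : Integrable h μ)
    {C : ℝ} (hC : ∀ z, |h z| ≤ C) : Integrable (fun z ↦ h z / ‖z‖) μ := by
  have hmeas : AEStronglyMeasurable (fun z ↦ h z / ‖z‖) μ :=
    (hi.aemeasurable.div measurable_norm.aemeasurable).aestronglyMeasurable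
  rw [← integrableOn_univ, ← union_compl_self (ball (0 : E) 1), integrableOn_union]
  constructor
  · refine integrableOn_ball_of_norm_le_rpow (by omega) (C := C) (α := 1) (by exact_mod_cast hd)
      (Eventually.of_forall fun z ↦ ?_) hmeas
    rw [Real.rpow_neg_one, Real.norm_eq_abs, abs_div, abs_norm, div_eq_mul_inv]
    gcongr
    exact hC z
  · refine hi.norm.integrableOn.mono' hmeas.restrict ?_
    filter_upwards [ae_restrict_mem measurableSet_ball.compl] with z hz
    rw [norm_div, norm_norm]
    exact div_le_self (norm_nonneg _) (by simpa using hz)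

theorem integral_comp_smul_div_norm (g : E → ℝ) {t : ℝ} (ht : 0 < t) :
    ∫ z, g (t • z) / ‖z‖ ∂μ = t * (t ^ finrank ℝ E)⁻¹ * ∫ z, g z / ‖z‖ ∂μ := by
  have hscale : ∀ z : E, g (t • z) / ‖z‖ = t * (g (t • z) / ‖t • z‖) := fun z ↦ by
    rw [norm_smul, Real.norm_of_nonneg ht.le]
    rcases eq_or_ne z 0 with rfl | hz
    · simp
    · field_simp
  simp_rw [hscale, integral_const_mul,
    Measure.integral_comp_smul_of_nonneg μ (fun w ↦ g w / ‖w‖) t (hR := ht.le), smul_eq_mul,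
    mul_assoc]

theorem hasDerivAt_integral_comp_smul_div_norm (hd : 1 < finrank ℝ E) (g : 𝓢(E, ℝ)) :
    HasDerivAt (fun t : ℝ ↦ ∫ z, g (t • z) / ‖z‖ ∂μ) (∫ z, fderiv ℝ g z z / ‖z‖ ∂μ) 1 := by
  obtain ⟨C, hC⟩ := g.exists_norm_fderiv_smul_le (finrank ℝ E + 1)
  have hdg : Continuous (fderiv ℝ g) := (g.smooth ⊤).continuous_fderiv (by simp)
  have hbound : ∀ z, ∀ t ∈ Ioi (1 / 2 : ℝ),
      ‖fderiv ℝ g (t • z) z / ‖z‖‖ ≤ C * (1 + ‖z‖) ^ (-((finrank ℝ E + 1 : ℕ) : ℝ)) :=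
    fun z t ht ↦ by
      rw [norm_div, norm_norm]
      exact (div_le_of_le_mul₀ (norm_nonneg _) (norm_nonneg _)
        ((fderiv ℝ g (t • z)).le_opNorm z)).trans (hC z t ht)
  have hderiv : ∀ z t, HasDerivAt (fun t : ℝ ↦ g (t • z) / ‖z‖) (fderiv ℝ g (t • z) z / ‖z‖) t :=
    fun z t ↦ by
      have h := g.differentiableAt.hasFDerivAt.comp_hasDerivAt t ((hasDerivAt_id' t).smul_const z)
      rw [one_smul] at h
      exact h.div_const ‖z‖
  have key := hasDerivAt_integral_of_dominated_loc_of_deriv_le (μ := μ) (x₀ := (1 : ℝ))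
    (F := fun t z ↦ g (t • z) / ‖z‖) (F' := fun t z ↦ fderiv ℝ g (t • z) z / ‖z‖)
    (Ioi_mem_nhds (by norm_num : (1 / 2 : ℝ) < 1))
    (Eventually.of_forall fun t ↦
      ((g.continuous.comp (continuous_const_smul t)).aemeasurable.div
        measurable_norm.aemeasurable).aestronglyMeasurable)
    (by simpa using (integrable_div_norm_of_abs_le hd g.integrable
      (fun z ↦ g.norm_le_seminorm ℝ z)))
    (((hdg.comp (continuous_const_smul 1)).clm_apply continuous_id).aemeasurable.div
        measurable_norm.aemeasurable).aestronglyMeasurable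
    (Eventually.of_forall hbound)
    ((integrable_one_add_norm (by push_cast; linarith)).const_mul _)
    (Eventually.of_forall fun z t _ ↦ hderiv z t)
  simpa using key.2

theorem integral_fderiv_apply_self_div_norm (hd : 1 < finrank ℝ E) (g : 𝓢(E, ℝ)) :
    ∫ z, fderiv ℝ g z z / ‖z‖ ∂μ = (1 - finrank ℝ E) * ∫ z, g z / ‖z‖ ∂μ := by
  set d := finrank ℝ E
  set I := ∫ z, g z / ‖z‖ ∂μ
  have hhom : HasDerivAt (fun t : ℝ ↦ t * (t ^ d)⁻¹ * I) ((1 - d) * I) 1 := by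
    refine (((hasDerivAt_id' (1 : ℝ)).mul ((hasDerivAt_pow d (1 : ℝ)).inv (by simp))).mul_const
      I).congr_deriv ?_
    simp only [Pi.inv_apply, one_pow, inv_one, mul_one, one_mul]
    ring
  have heq : (fun t : ℝ ↦ ∫ z, g (t • z) / ‖z‖ ∂μ) =ᶠ[𝓝 1] fun t ↦ t * (t ^ d)⁻¹ * I :=
    eventually_gt_nhds one_pos |>.mono fun t ht ↦ integral_comp_smul_div_norm _ ht
  exact (hasDerivAt_integral_comp_smul_div_norm hd g).unique (hhom.congr_of_eventuallyEq heq)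

theorem integral_fderiv_apply_sub_div_norm_sub (hd : 1 < finrank ℝ E) (f : 𝓢(E, ℝ)) (x : E) :
    ∫ y, fderiv ℝ f y (x - y) / ‖x - y‖ ∂μ = (finrank ℝ E - 1) * ∫ y, f y / ‖x - y‖ ∂μ := by
  set g := SchwartzMap.compSubConstCLM ℝ (-x) f
  have hg : ⇑g = fun z ↦ f (z + x) := funext fun z ↦ by simp [g]
  have hL : ∀ z, fderiv ℝ f (z + x) (x - (z + x)) / ‖x - (z + x)‖ = -(fderiv ℝ g z z / ‖z‖) :=
    fun z ↦ by rw [hg, fderiv_comp_add_right, sub_add_cancel_right, norm_neg, map_neg, neg_div]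
  have hR : ∀ z, f (z + x) / ‖x - (z + x)‖ = g z / ‖z‖ := fun z ↦ by
    rw [hg, sub_add_cancel_right, norm_neg]
  rw [← integral_add_right_eq_self _ x, ← integral_add_right_eq_self (fun y ↦ f y / ‖x - y‖) x]
  simp only [hL, hR, integral_neg, integral_fderiv_apply_self_div_norm hd g]
  ring

/-- `∫ (x−y)·∇f(y)/|x−y| dy = 2 ∫ f(y)/|x−y| dy` for Schwartz `f`. -/
theorem stmt_10 (f : 𝓢(R3, ℝ)) (x : R3) :
    (∫ y : R3, fderiv ℝ (⇑f) y (x - y) / ‖x - y‖) = 2 * ∫ y : R3, f y / ‖x - y‖ := by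
  rw [integral_fderiv_apply_sub_div_norm_sub (by simp) f x, finrank_euclideanSpace_fin]
  norm_num
end
end

section
/- Let m, c > 0, s ≥ 0, and define F_c(ξ) := √(c²|ξ|²+m²c⁴) − mc² − |ξ|²/(2m) for ξ ∈ ℝ³. Then |F_c(ξ)| ≤ 36 |ξ|⁴ / (m³ c²) for all ξ ∈ ℝ³, and consequently for every measurable g : ℝ³ → ℂ one has ∫_{ℝ³} (1+|ξ|²)^s |F_c(ξ)|² |g(ξ)|² dξ ≤ (36/(m³c²))² ∫_{ℝ³} (1+|ξ|²)^{s+4} |g(ξ)|² dξ. -/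
open MeasureTheory

noncomputable section

/-- `|F_c(ξ)| ≤ 36|ξ|⁴/(m³c²)` for all `ξ`, and the resulting weighted
`L²`-bound `∫ (1+|ξ|²)^s |F_c(ξ)|²|g(ξ)|² dξ ≤ (36/(m³c²))² ∫ (1+|ξ|²)^{s+4} |g(ξ)|² dξ`
(in the extended reals). -/
theorem stmt_16 (m c s : ℝ) (hm : 0 < m) (hc : 0 < c) (hs : 0 ≤ s) :
    (∀ ξ : R3,
      |Real.sqrt (c ^ 2 * ‖ξ‖ ^ 2 + m ^ 2 * c ^ 4) - m * c ^ 2 - ‖ξ‖ ^ 2 / (2 * m)|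
        ≤ 36 * ‖ξ‖ ^ 4 / (m ^ 3 * c ^ 2)) ∧
    ∀ g : R3 → ℂ, Measurable g →
      (∫⁻ ξ : R3, ENNReal.ofReal ((1 + ‖ξ‖ ^ 2) ^ s *
          |Real.sqrt (c ^ 2 * ‖ξ‖ ^ 2 + m ^ 2 * c ^ 4) - m * c ^ 2 - ‖ξ‖ ^ 2 / (2 * m)| ^ 2 *
          ‖g ξ‖ ^ 2))
        ≤ ENNReal.ofReal ((36 / (m ^ 3 * c ^ 2)) ^ 2) *
            ∫⁻ ξ : R3, ENNReal.ofReal ((1 + ‖ξ‖ ^ 2) ^ (s + 4) * ‖g ξ‖ ^ 2) := by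
  have hmc : 0 < m ^ 3 * c ^ 2 := by positivity
  have key : ∀ ξ : R3,
      |Real.sqrt (c ^ 2 * ‖ξ‖ ^ 2 + m ^ 2 * c ^ 4) - m * c ^ 2 - ‖ξ‖ ^ 2 / (2 * m)|
        ≤ 36 * ‖ξ‖ ^ 4 / (m ^ 3 * c ^ 2) := by
    intro ξ
    set x := ‖ξ‖ with hxdef
    have hx0 : 0 ≤ x := norm_nonneg _
    have hA : 0 ≤ c ^ 2 * x ^ 2 + m ^ 2 * c ^ 4 := by positivity
    set r := Real.sqrt (c ^ 2 * x ^ 2 + m ^ 2 * c ^ 4) with hrdef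
    have hr2 : r ^ 2 = c ^ 2 * x ^ 2 + m ^ 2 * c ^ 4 := Real.sq_sqrt hA
    have hrlb : m * c ^ 2 ≤ r := by
      have h1 : m * c ^ 2 = Real.sqrt (m ^ 2 * c ^ 4) := by
        rw [show m ^ 2 * c ^ 4 = (m * c ^ 2) ^ 2 by ring, Real.sqrt_sq (by positivity)]
      rw [h1]
      exact Real.sqrt_le_sqrt (by nlinarith)
    have hu : x ^ 2 / (2 * m) * (2 * m) = x ^ 2 := by field_simp
    have hv0 : 0 ≤ 36 * x ^ 4 / (m ^ 3 * c ^ 2) := by positivity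
    have hsq : (m * c ^ 2 + x ^ 2 / (2 * m)) ^ 2
        = c ^ 2 * x ^ 2 + m ^ 2 * c ^ 4 + (x ^ 2 / (2 * m)) ^ 2 := by
      field_simp; ring
    have hub : r ≤ m * c ^ 2 + x ^ 2 / (2 * m) := by
      have h1 : c ^ 2 * x ^ 2 + m ^ 2 * c ^ 4 ≤ (m * c ^ 2 + x ^ 2 / (2 * m)) ^ 2 := by
        rw [hsq]; nlinarith [sq_nonneg (x ^ 2 / (2 * m))]
      calc r ≤ Real.sqrt ((m * c ^ 2 + x ^ 2 / (2 * m)) ^ 2) := Real.sqrt_le_sqrt h1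
        _ = m * c ^ 2 + x ^ 2 / (2 * m) := Real.sqrt_sq (by positivity)
    set d := m * c ^ 2 + x ^ 2 / (2 * m) - r with hddef
    have hd0 : 0 ≤ d := by simp [hddef]; linarith
    have hdprod : d * (m * c ^ 2 + x ^ 2 / (2 * m) + r) = (x ^ 2 / (2 * m)) ^ 2 := by
      have : d * (m * c ^ 2 + x ^ 2 / (2 * m) + r)
          = (m * c ^ 2 + x ^ 2 / (2 * m)) ^ 2 - r ^ 2 := by ring
      rw [this, hsq, hr2]; ring
    have hSge : 2 * (m * c ^ 2) ≤ m * c ^ 2 + x ^ 2 / (2 * m) + r := by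
      have : 0 ≤ x ^ 2 / (2 * m) := by positivity
      linarith
    have hkey : d * (8 * (m ^ 3 * c ^ 2)) ≤ x ^ 4 := by
      have h1 : d * (2 * (m * c ^ 2)) ≤ (x ^ 2 / (2 * m)) ^ 2 := by
        calc d * (2 * (m * c ^ 2)) ≤ d * (m * c ^ 2 + x ^ 2 / (2 * m) + r) :=
              mul_le_mul_of_nonneg_left hSge hd0
          _ = (x ^ 2 / (2 * m)) ^ 2 := hdprod
      have h2 : (x ^ 2 / (2 * m)) ^ 2 * (4 * m ^ 2) = x ^ 4 := by
        field_simp; ring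
      calc d * (8 * (m ^ 3 * c ^ 2)) = d * (2 * (m * c ^ 2)) * (4 * m ^ 2) := by ring
        _ ≤ (x ^ 2 / (2 * m)) ^ 2 * (4 * m ^ 2) :=
            mul_le_mul_of_nonneg_right h1 (by positivity)
        _ = x ^ 4 := h2
    rw [abs_le]
    constructor
    · have hdle : d ≤ 36 * x ^ 4 / (m ^ 3 * c ^ 2) := by
        rw [le_div_iff₀ hmc]
        nlinarith [hkey, hd0, pow_nonneg hx0 4, hmc]
      have := hddef
      linarith
    · linarith
  refine ⟨key, fun g hg => ?_⟩
  set C := (36 / (m ^ 3 * c ^ 2)) ^ 2 with hCdef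
  have hC : 0 ≤ C := by positivity
  have hpt : ∀ ξ : R3,
      (1 + ‖ξ‖ ^ 2) ^ s *
          |Real.sqrt (c ^ 2 * ‖ξ‖ ^ 2 + m ^ 2 * c ^ 4) - m * c ^ 2 - ‖ξ‖ ^ 2 / (2 * m)| ^ 2 *
          ‖g ξ‖ ^ 2
        ≤ C * ((1 + ‖ξ‖ ^ 2) ^ (s + 4) * ‖g ξ‖ ^ 2) := by
    intro ξ
    have hb : (0:ℝ) < 1 + ‖ξ‖ ^ 2 := by positivity
    have h1 : |Real.sqrt (c ^ 2 * ‖ξ‖ ^ 2 + m ^ 2 * c ^ 4) - m * c ^ 2 - ‖ξ‖ ^ 2 / (2 * m)| ^ 2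
        ≤ C * ‖ξ‖ ^ 8 := by
      calc _ ≤ (36 * ‖ξ‖ ^ 4 / (m ^ 3 * c ^ 2)) ^ 2 :=
              pow_le_pow_left₀ (abs_nonneg _) (key ξ) 2
        _ = C * ‖ξ‖ ^ 8 := by rw [hCdef]; ring
    have h2 : ‖ξ‖ ^ 8 ≤ (1 + ‖ξ‖ ^ 2) ^ (4:ℝ) := by
      rw [show (4:ℝ) = ((4:ℕ):ℝ) by norm_num, Real.rpow_natCast]
      calc ‖ξ‖ ^ 8 = (‖ξ‖ ^ 2) ^ 4 := by ring
        _ ≤ (1 + ‖ξ‖ ^ 2) ^ 4 := pow_le_pow_left₀ (by positivity) (by linarith) 4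
    have hPs : 0 ≤ (1 + ‖ξ‖ ^ 2) ^ s := Real.rpow_nonneg hb.le s
    have hgs : 0 ≤ ‖g ξ‖ ^ 2 := sq_nonneg _
    have hrw : (1 + ‖ξ‖ ^ 2) ^ (s + 4) = (1 + ‖ξ‖ ^ 2) ^ s * (1 + ‖ξ‖ ^ 2) ^ (4:ℝ) :=
      Real.rpow_add hb s 4
    rw [hrw]
    calc (1 + ‖ξ‖ ^ 2) ^ s * _ ^ 2 * ‖g ξ‖ ^ 2
        ≤ (1 + ‖ξ‖ ^ 2) ^ s * (C * ‖ξ‖ ^ 8) * ‖g ξ‖ ^ 2 := by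
          apply mul_le_mul_of_nonneg_right _ hgs
          exact mul_le_mul_of_nonneg_left h1 hPs
      _ ≤ (1 + ‖ξ‖ ^ 2) ^ s * (C * (1 + ‖ξ‖ ^ 2) ^ (4:ℝ)) * ‖g ξ‖ ^ 2 := by
          apply mul_le_mul_of_nonneg_right _ hgs
          exact mul_le_mul_of_nonneg_left (mul_le_mul_of_nonneg_left h2 hC) hPs
      _ = C * ((1 + ‖ξ‖ ^ 2) ^ s * (1 + ‖ξ‖ ^ 2) ^ (4:ℝ) * ‖g ξ‖ ^ 2) := by ring
  calc (∫⁻ ξ : R3, ENNReal.ofReal ((1 + ‖ξ‖ ^ 2) ^ s *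
          |Real.sqrt (c ^ 2 * ‖ξ‖ ^ 2 + m ^ 2 * c ^ 4) - m * c ^ 2 - ‖ξ‖ ^ 2 / (2 * m)| ^ 2 *
          ‖g ξ‖ ^ 2))
      ≤ ∫⁻ ξ : R3, ENNReal.ofReal (C * ((1 + ‖ξ‖ ^ 2) ^ (s + 4) * ‖g ξ‖ ^ 2)) :=
        lintegral_mono fun ξ => ENNReal.ofReal_le_ofReal (hpt ξ)
    _ = ∫⁻ ξ : R3, ENNReal.ofReal C * ENNReal.ofReal ((1 + ‖ξ‖ ^ 2) ^ (s + 4) * ‖g ξ‖ ^ 2) := by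
        simp_rw [ENNReal.ofReal_mul hC]
    _ = ENNReal.ofReal C * ∫⁻ ξ : R3, ENNReal.ofReal ((1 + ‖ξ‖ ^ 2) ^ (s + 4) * ‖g ξ‖ ^ 2) :=
        lintegral_const_mul' _ _ ENNReal.ofReal_ne_top
end
end

section
/- Let Q : ℝ³ → ℝ be a Schwartz function. Then ∫_{ℝ³} ∇( x·∇Q(x) + 2Q(x) ) · ∇Q(x) dx = (3/2) ∫_{ℝ³} |∇Q(x)|² dx. -/
open MeasureTheory
open scoped SchwartzMap RealInnerProductSpace

noncomputable section

/-!
Since `∂ᵢ (x · ∇Q) = ∂ᵢQ + x · ∇(∂ᵢQ)` and the Hessian is symmetric, the integrand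
`∇(x · ∇Q + c Q) · ∇Q` equals `(1 + c) |∇Q|² + ½ x · ∇|∇Q|²`. Integrating by parts in each
coordinate direction gives `∫ x · ∇f = -n ∫ f` for every Schwartz function `f` on an
`n`-dimensional space; with `f = |∇Q|²`, `n = 3` and `c = 2` the total is `(3 - 3/2) ∫ |∇Q|²`.
-/

open SchwartzMap Module InnerProductSpace
open scoped LineDeriv

namespace SchwartzMap

variable {D : Type*} [NormedAddCommGroup D] [NormedSpace ℝ D] [MeasurableSpace D] [BorelSpace D]
  [FiniteDimensional ℝ D] {μ : Measure D} [μ.IsAddHaarMeasure]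

theorem integrable_clm_mul (L : D →L[ℝ] ℝ) (f : 𝓢(D, ℝ)) :
    Integrable (fun x => L x * f x) μ := by
  have h := (smulLeftCLM ℝ (⇑L) f).integrable (μ := μ)
  rwa [smulLeftCLM_apply L.hasTemperateGrowth] at h

theorem integrable_fderiv_apply_self (f : 𝓢(D, ℝ)) : Integrable (fun x => fderiv ℝ f x x) μ :=
  (bilinLeftCLM (.id ℝ (D →L[ℝ] ℝ)) Function.HasTemperateGrowth.id
    (fderivCLM ℝ D ℝ f)).integrable

theorem integrable_clm_mul_fderiv (L : D →L[ℝ] ℝ) (f : 𝓢(D, ℝ)) (v : D) :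
    Integrable (fun x => L x * fderiv ℝ f x v) μ := by
  simpa [lineDerivOp_apply_eq_fderiv] using integrable_clm_mul (μ := μ) L (∂_{v} f)

theorem integral_clm_mul_fderiv (L : D →L[ℝ] ℝ) (f : 𝓢(D, ℝ)) (v : D) :
    ∫ x, L x * fderiv ℝ f x v ∂μ = -(L v * ∫ x, f x ∂μ) := by
  rw [integral_mul_fderiv_eq_neg_fderiv_mul_of_integrable
    (by simpa using f.integrable.const_mul (L v)) (integrable_clm_mul_fderiv L f v)
    (integrable_clm_mul L f) (fun x _ => L.differentiableAt) (fun x _ => f.differentiableAt)]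
  simp [integral_const_mul]

theorem integral_fderiv_apply_self (f : 𝓢(D, ℝ)) :
    ∫ x, fderiv ℝ f x x ∂μ = -(finrank ℝ D * ∫ x, f x ∂μ) := by
  let b := Module.finBasis ℝ D
  let coord (j : Fin (finrank ℝ D)) : D →L[ℝ] ℝ := LinearMap.toContinuousLinearMap (b.coord j)
  have hexpand (x : D) : fderiv ℝ f x x = ∑ j, coord j x * fderiv ℝ f x (b j) :=
    calc fderiv ℝ f x x = fderiv ℝ f x (∑ j, b.repr x j • b j) := by rw [b.sum_repr]
      _ = _ := by rw [map_sum]; simp [coord]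
  simp_rw [hexpand]
  rw [integral_finsetSum _ fun j _ => integrable_clm_mul_fderiv (coord j) f (b j)]
  simp only [integral_clm_mul_fderiv]
  simp [coord]

end SchwartzMap

theorem fderiv_fderiv_apply_self_add_mul_apply {E : Type*} [NormedAddCommGroup E]
    [NormedSpace ℝ E] {f : E → ℝ} (hf : ContDiff ℝ 2 f) (c : ℝ) (x v : E) :
    fderiv ℝ (fun y => fderiv ℝ f y y + c * f y) x v
      = fderiv ℝ (fderiv ℝ f) x x v + (1 + c) * fderiv ℝ f x v := by
  have h1 : Differentiable ℝ f := hf.differentiable (by norm_num)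
  have h2 : Differentiable ℝ (fderiv ℝ f) :=
    (hf.fderiv_right (m := 1) (by norm_num)).differentiable one_ne_zero
  have hsymm := hf.contDiffAt.isSymmSndFDerivAt (x := x) (by simp)
  have hderiv : HasFDerivAt (fun y => fderiv ℝ f y y + c * f y) _ x :=
    ((h2 x).hasFDerivAt.clm_apply (hasFDerivAt_id x)).add ((h1 x).hasFDerivAt.const_mul c)
  rw [hderiv.fderiv]
  simp only [ContinuousLinearMap.comp_id, id_eq, add_apply, ContinuousLinearMap.flip_apply,
    hsymm v x, smul_apply, smul_eq_mul]
  ring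

section Gradient

variable {E : Type*} [NormedAddCommGroup E] [InnerProductSpace ℝ E] [CompleteSpace E]

theorem HasFDerivAt.gradient_of_fderiv {f : E → ℝ} {f'' : E →L[ℝ] E →L[ℝ] ℝ} {x : E}
    (h : HasFDerivAt (fderiv ℝ f) f'' x) :
    HasFDerivAt (gradient f)
      ((toDual ℝ E).symm.toContinuousLinearEquiv.toContinuousLinearMap ∘L f'') x :=
  (toDual ℝ E).symm.toContinuousLinearEquiv.toContinuousLinearMap.hasFDerivAt.comp x h

theorem fderiv_norm_sq_gradient_apply {f : E → ℝ} (hf : ContDiff ℝ 2 f) (x v : E) :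
    fderiv ℝ (fun y => ‖gradient f y‖ ^ 2) x v
      = 2 * fderiv ℝ (fderiv ℝ f) x v (gradient f x) := by
  have h2 : Differentiable ℝ (fderiv ℝ f) :=
    (hf.fderiv_right (m := 1) (by norm_num)).differentiable one_ne_zero
  rw [((h2 x).hasFDerivAt.gradient_of_fderiv).norm_sq.fderiv]
  change 2 • ⟪gradient f x, (toDual ℝ E).symm (fderiv ℝ (fderiv ℝ f) x v)⟫ = _
  rw [real_inner_comm, toDual_symm_apply, two_nsmul, two_mul]

theorem inner_gradient_fderiv_apply_self_add_mul {f : E → ℝ} (hf : ContDiff ℝ 2 f) (c : ℝ)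
    (x : E) :
    ⟪gradient (fun y => fderiv ℝ f y y + c * f y) x, gradient f x⟫
      = 1 / 2 * fderiv ℝ (fun y => ‖gradient f y‖ ^ 2) x x + (1 + c) * ‖gradient f x‖ ^ 2 := by
  rw [inner_gradient_left, fderiv_fderiv_apply_self_add_mul_apply hf,
    fderiv_norm_sq_gradient_apply hf, ← inner_gradient_left (y := gradient f x),
    real_inner_self_eq_norm_sq]
  ring

def SchwartzMap.normSqGradient (f : 𝓢(E, ℝ)) : 𝓢(E, ℝ) :=
  let grad := postcompCLM (toDual ℝ E).symm.toContinuousLinearEquiv.toContinuousLinearMap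
    (fderivCLM ℝ E ℝ f)
  pairing (innerSL ℝ) grad grad

theorem SchwartzMap.normSqGradient_apply (f : 𝓢(E, ℝ)) (x : E) :
    f.normSqGradient x = ‖gradient f x‖ ^ 2 := by
  rw [← real_inner_self_eq_norm_sq]
  rfl

end Gradient

theorem SchwartzMap.integral_inner_gradient_fderiv_apply_self_add_mul {E : Type*}
    [NormedAddCommGroup E] [InnerProductSpace ℝ E] [FiniteDimensional ℝ E] [MeasurableSpace E]
    [BorelSpace E] {μ : Measure E} [μ.IsAddHaarMeasure] (Q : 𝓢(E, ℝ)) (c : ℝ) :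
    ∫ x, ⟪gradient (fun y => fderiv ℝ Q y y + c * Q y) x, gradient Q x⟫ ∂μ
      = (1 + c - finrank ℝ E / 2) * ∫ x, ‖gradient Q x‖ ^ 2 ∂μ := by
  have hnormSq : ⇑Q.normSqGradient = fun y => ‖gradient Q y‖ ^ 2 := funext Q.normSqGradient_apply
  have hInt : Integrable (fun x => ‖gradient Q x‖ ^ 2) μ := hnormSq ▸ Q.normSqGradient.integrable
  have hIntEuler : Integrable (fun x => fderiv ℝ (fun y => ‖gradient Q y‖ ^ 2) x x) μ :=
    hnormSq ▸ Q.normSqGradient.integrable_fderiv_apply_self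
  simp_rw [inner_gradient_fderiv_apply_self_add_mul (Q.smooth 2) c]
  rw [integral_add (hIntEuler.const_mul _) (hInt.const_mul _), integral_const_mul,
    integral_const_mul, ← hnormSq, integral_fderiv_apply_self]
  ring

/-- `∫ ∇(x·∇Q + 2Q)·∇Q dx = (3/2) ∫ |∇Q|² dx` for Schwartz `Q`. -/
theorem stmt_18 (Q : 𝓢(R3, ℝ)) :
    (∫ x : R3, ⟪gradient (fun y : R3 => fderiv ℝ (⇑Q) y y + 2 * Q y) x, gradient (⇑Q) x⟫)
      = (3 / 2) * ∫ x : R3, ‖gradient (⇑Q) x‖ ^ 2 := by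
  rw [integral_inner_gradient_fderiv_apply_self_add_mul, finrank_euclideanSpace_fin]
  norm_num
end
end

section
/- Fix m, λ > 0 and ε ∈ (0, 1/4). There exist constants C > 0 and c₀ > 0 such that for every c ≥ c₀ and every z > 0, √c ∫_{(1/4)√(m/λ) √c z}^{c z} t (t²+z²)^{−5/4} exp( −(λ/c) t − (1/2−ε) m c z² / t ) dt ≤ C z^{−3/2} e^{−(1/2−ε) m z}. -/
open MeasureTheory

private lemma stmt19_aux1 (β M c z : ℝ) (hc : c ≠ 0) (hz : z ≠ 0) :
    -(β * M * c * z ^ 2) / (c * z) = -β * M * z := by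
  field_simp

private lemma stmt19_aux2 (β M c z E S : ℝ) (hβ : β ≠ 0) (hM : M ≠ 0) (hc : c ≠ 0)
    (hz : z ≠ 0) : c * (S * E / (β * M * c * z ^ 2)) = 1 / (β * M) * (S / z ^ 2) * E := by
  field_simp

/-- uniform-in-`c` bound for the middle piece `I_C(z)` of the Green's-function
estimate. -/
theorem stmt_19 (m lam ε : ℝ) (hm : 0 < m) (hlam : 0 < lam) (hε : 0 < ε) (hε' : ε < 1 / 4) :
    ∃ C > (0 : ℝ), ∃ c₀ > (0 : ℝ), ∀ c : ℝ, c ≥ c₀ → ∀ z : ℝ, 0 < z →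
      Real.sqrt c *
          ∫ t in Set.Icc ((1 / 4) * Real.sqrt (m / lam) * Real.sqrt c * z) (c * z),
            t * (t ^ 2 + z ^ 2) ^ (-(5 : ℝ) / 4) *
              Real.exp (-(lam / c) * t - (1 / 2 - ε) * m * c * z ^ 2 / t)
        ≤ C * z ^ (-(3 : ℝ) / 2) * Real.exp (-(1 / 2 - ε) * m * z) := by
  have hβ : 0 < 1 / 2 - ε := by linarith
  refine ⟨1 / ((1 / 2 - ε) * m), by positivity, max 1 (m / lam), by positivity, ?_⟩
  intro c hc z hz
  have hc1 : (1 : ℝ) ≤ c := le_trans (le_max_left _ _) hc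
  have hc0 : (0 : ℝ) < c := by linarith
  have hml : m / lam ≤ c := le_trans (le_max_right _ _) hc
  set a := (1 / 4) * Real.sqrt (m / lam) * Real.sqrt c * z with ha_def
  set b := c * z with hb_def
  set K := (1 / 2 - ε) * m * c * z ^ 2 with hK_def
  have hK0 : 0 < K := by positivity
  have ha0 : 0 < a := by
    have h1 : 0 < Real.sqrt (m / lam) := Real.sqrt_pos.mpr (by positivity)
    have h2 : 0 < Real.sqrt c := Real.sqrt_pos.mpr hc0
    positivity
  have hsq : Real.sqrt c * Real.sqrt c = c := Real.mul_self_sqrt hc0.le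
  have hsle : Real.sqrt (m / lam) ≤ Real.sqrt c := Real.sqrt_le_sqrt hml
  have hsnn : 0 ≤ Real.sqrt c := Real.sqrt_nonneg c
  have hab : a ≤ b := by
    have h4 : Real.sqrt (m / lam) * Real.sqrt c ≤ c := by
      calc Real.sqrt (m / lam) * Real.sqrt c ≤ Real.sqrt c * Real.sqrt c :=
            mul_le_mul_of_nonneg_right hsle hsnn
        _ = c := hsq
    have h5 : Real.sqrt (m / lam) * Real.sqrt c * z ≤ c * z :=
      mul_le_mul_of_nonneg_right h4 hz.le
    have h6 : 0 ≤ Real.sqrt (m / lam) * Real.sqrt c * z := by positivity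
    rw [ha_def, hb_def]
    linarith
  have hb0 : 0 < b := by positivity
  -- the comparison function
  set g : ℝ → ℝ := fun t => Real.sqrt (c * z) * (Real.exp (-K / t) / t ^ 2) with hg_def
  set f : ℝ → ℝ := fun t => t * (t ^ 2 + z ^ 2) ^ (-(5 : ℝ) / 4) *
      Real.exp (-(lam / c) * t - K / t) with hf_def
  -- pointwise bound
  have hpt : ∀ t ∈ Set.Icc a b, f t ≤ g t := by
    intro t ht
    have ht0 : 0 < t := lt_of_lt_of_le ha0 ht.1
    have h1 : (t ^ 2 + z ^ 2) ^ (-(5 : ℝ) / 4) ≤ (t ^ 2) ^ (-(5 : ℝ) / 4) :=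
      Real.rpow_le_rpow_of_nonpos (by positivity) (by nlinarith) (by norm_num)
    have h2 : Real.exp (-(lam / c) * t - K / t) ≤ Real.exp (-K / t) := by
      apply Real.exp_le_exp.mpr
      have h0 : 0 ≤ lam / c * t := by positivity
      ring_nf
      ring_nf at h0
      linarith
    have step1 : f t ≤ t * (t ^ 2) ^ (-(5 : ℝ) / 4) * Real.exp (-K / t) := by
      apply mul_le_mul (mul_le_mul_of_nonneg_left h1 ht0.le) h2 (Real.exp_pos _).le
      positivity
    have key : t * (t ^ 2) ^ (-(5 : ℝ) / 4) = Real.sqrt t / t ^ 2 := by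
      rw [Real.sqrt_eq_rpow, ← Real.rpow_natCast t 2, ← Real.rpow_mul ht0.le,
        ← Real.rpow_sub ht0]
      nth_rewrite 1 [← Real.rpow_one t]
      rw [← Real.rpow_add ht0]
      norm_num
    have hst : Real.sqrt t ≤ Real.sqrt (c * z) := Real.sqrt_le_sqrt ht.2
    calc f t ≤ t * (t ^ 2) ^ (-(5 : ℝ) / 4) * Real.exp (-K / t) := step1
      _ = Real.sqrt t * (Real.exp (-K / t) / t ^ 2) := by rw [key]; ring
      _ ≤ Real.sqrt (c * z) * (Real.exp (-K / t) / t ^ 2) := by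
          apply mul_le_mul_of_nonneg_right hst
          positivity
      _ = g t := rfl
  -- continuity / integrability
  have hnz : ∀ t ∈ Set.Icc a b, t ≠ 0 := fun t ht => (lt_of_lt_of_le ha0 ht.1).ne'
  have hcf : ContinuousOn f (Set.Icc a b) := by
    apply ContinuousOn.mul
    · apply ContinuousOn.mul continuousOn_id
      apply ContinuousOn.rpow_const (by fun_prop)
      intro t ht
      left
      positivity
    · apply Real.continuous_exp.comp_continuousOn
      apply ContinuousOn.sub (by fun_prop)
      exact ContinuousOn.div continuousOn_const continuousOn_id hnz
  have hcg : ContinuousOn g (Set.Icc a b) := by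
    apply ContinuousOn.mul continuousOn_const
    apply ContinuousOn.div
    · apply Real.continuous_exp.comp_continuousOn
      exact ContinuousOn.div continuousOn_const continuousOn_id hnz
    · fun_prop
    · intro t ht; exact pow_ne_zero _ (hnz t ht)
  have hfi : IntegrableOn f (Set.Icc a b) := hcf.integrableOn_Icc
  have hgi : IntegrableOn g (Set.Icc a b) := hcg.integrableOn_Icc
  have hmono : (∫ t in Set.Icc a b, f t) ≤ ∫ t in Set.Icc a b, g t :=
    setIntegral_mono_on hfi hgi measurableSet_Icc hpt
  -- compute the integral of g via FTC
  set F : ℝ → ℝ := fun t => Real.exp (-K / t) / K with hF_def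
  have hderiv : ∀ t ∈ Set.uIcc a b, HasDerivAt F (Real.exp (-K / t) / t ^ 2) t := by
    intro t ht
    rw [Set.uIcc_of_le hab] at ht
    have ht0 : 0 < t := lt_of_lt_of_le ha0 ht.1
    have h := (((hasDerivAt_inv ht0.ne').const_mul (-K)).exp).div_const K
    have hfun : (fun x : ℝ => Real.exp (-K * x⁻¹) / K) = F := by
      rw [hF_def]; funext x; simp only [div_eq_mul_inv]
    rw [hfun] at h
    have hval : Real.exp (-K * t⁻¹) * (-K * -(t ^ 2)⁻¹) / K = Real.exp (-K / t) / t ^ 2 := by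
      rw [show -K * t⁻¹ = -K / t from (div_eq_mul_inv (-K) t).symm]
      field_simp
    rwa [hval] at h
  have hci : ContinuousOn (fun t => Real.exp (-K / t) / t ^ 2) (Set.uIcc a b) := by
    rw [Set.uIcc_of_le hab]
    apply ContinuousOn.div
    · apply Real.continuous_exp.comp_continuousOn
      exact ContinuousOn.div continuousOn_const continuousOn_id hnz
    · fun_prop
    · intro t ht; exact pow_ne_zero _ (hnz t ht)
  have hftc : (∫ t in a..b, Real.exp (-K / t) / t ^ 2) = F b - F a :=
    intervalIntegral.integral_eq_sub_of_hasDerivAt hderiv hci.intervalIntegrable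
  have hgval : (∫ t in Set.Icc a b, g t) = Real.sqrt (c * z) * (F b - F a) := by
    rw [hg_def]
    rw [MeasureTheory.integral_Icc_eq_integral_Ioc, ← intervalIntegral.integral_of_le hab,
      intervalIntegral.integral_const_mul, hftc]
  have hFb : Real.sqrt (c * z) * (F b - F a) ≤ Real.sqrt (c * z) * F b := by
    apply mul_le_mul_of_nonneg_left _ (Real.sqrt_nonneg _)
    have : 0 ≤ F a := by rw [hF_def]; positivity
    linarith
  -- final computation
  have hexp : F b = Real.exp (-(1 / 2 - ε) * m * z) / K := by
    rw [hF_def]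
    simp only
    congr 2
    rw [hK_def, hb_def]
    exact stmt19_aux1 _ _ _ _ hc0.ne' hz.ne'
  have hzpow : z ^ (-(3 : ℝ) / 2) = Real.sqrt z / z ^ 2 := by
    rw [Real.sqrt_eq_rpow, ← Real.rpow_natCast z 2, ← Real.rpow_sub hz]
    norm_num
  have hfinal : Real.sqrt c * (Real.sqrt (c * z) * F b)
      = 1 / ((1 / 2 - ε) * m) * z ^ (-(3 : ℝ) / 2) * Real.exp (-(1 / 2 - ε) * m * z) := by
    rw [hexp, hzpow, Real.sqrt_mul hc0.le]
    set E := Real.exp (-(1 / 2 - ε) * m * z) with hE_def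
    have hrw : Real.sqrt c * (Real.sqrt c * Real.sqrt z * (E / K))
        = (Real.sqrt c * Real.sqrt c) * (Real.sqrt z * E / K) := by ring
    rw [hrw, hsq, hK_def]
    exact stmt19_aux2 _ _ _ _ _ _ hβ.ne' hm.ne' hc0.ne' hz.ne'
  calc Real.sqrt c * ∫ t in Set.Icc a b, f t
      ≤ Real.sqrt c * ∫ t in Set.Icc a b, g t := by
        apply mul_le_mul_of_nonneg_left hmono (Real.sqrt_nonneg _)
    _ = Real.sqrt c * (Real.sqrt (c * z) * (F b - F a)) := by rw [hgval]
    _ ≤ Real.sqrt c * (Real.sqrt (c * z) * F b) := by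
        apply mul_le_mul_of_nonneg_left hFb (Real.sqrt_nonneg _)
    _ = 1 / ((1 / 2 - ε) * m) * z ^ (-(3 : ℝ) / 2) * Real.exp (-(1 / 2 - ε) * m * z) := hfinal
end
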